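/- arXiv:1210.3114 — 2 statements merged into one kernel-verified Lean document; each statement's English description precedes it below -/
import Mathlib

section
/- Saturation at base type: let t, u be functions from states to ℕ. If for every state s there exists s' ≥ s such that (i) for all s'' ≥ s', t(s'') = u(s''), and (ii) u is computable (for every state r there is r' ≥ r with u defined in r'), then t is computable: for every state s there exists a state r ≥ s in which t is defined. -/
/-- A state: an approximation of the Skolem functions. -/
def State : Type := ℕ → ℕ → ℕ

/-- The domain of a state: arguments at which `s` gives a correct witness for `A_i`. -/
def dm (A : ℕ → ℕ → ℕ → Prop) (s : State) : Set (ℕ × ℕ) :=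
  {p | (∃ y, A p.1 p.2 y) → A p.1 p.2 (s p.1 p.2)}

/-- Ordering of states: `s'` extends `s` if it agrees with `s` on `dm s`. -/
def StateGe (A : ℕ → ℕ → ℕ → Prop) (s' s : State) : Prop :=
  ∀ p ∈ dm A s, s' p.1 p.2 = s p.1 p.2

/-- `t` is defined in state `s` if its value does not change on extensions of `s`. -/
def DefinedIn (A : ℕ → ℕ → ℕ → Prop) (t : State → ℕ) (s : State) : Prop :=
  ∀ s' : State, StateGe A s' s → t s' = t s

theorem saturation_base (A : ℕ → ℕ → ℕ → Prop) (t u : State → ℕ)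
    (h : ∀ s : State, ∃ s' : State, StateGe A s' s ∧
        (∀ s'' : State, StateGe A s'' s' → t s'' = u s''))
    (hu : ∀ r : State, ∃ r' : State, StateGe A r' r ∧ DefinedIn A u r') :
    ∀ s : State, ∃ r : State, StateGe A r s ∧ DefinedIn A t r := by
  have trans : ∀ a b c : State, StateGe A a b → StateGe A b c → StateGe A a c := by
    intro a b c hab hbc p hp
    have hpb : p ∈ dm A b := fun hy => by rw [hbc p hp]; exact hp hy
    rw [hab p hpb, hbc p hp]
  intro s
  obtain ⟨s', hs', ht⟩ := h s
  obtain ⟨r', hr', hdu⟩ := hu s'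
  refine ⟨r', trans _ _ _ hr' hs', ?_⟩
  intro s'' hs''
  rw [ht s'' (trans _ _ _ hs'' hr'), ht r' hr', hdu s'' hs'']
end

section
/- The Skolem oracle evaluated at a computable argument is computable: for each index i, if u : State → ℕ is computable, then the function s ↦ s i (u s) is computable, i.e., for every state s there exists s' ≥ s such that for all s'' ≥ s', s'' i (u s'') = s' i (u s'). (Classical logic is used, case-splitting on whether A_i(u(s'), m) holds for various m.) -/
lemma stateGe_trans {A : ℕ → ℕ → ℕ → Prop} {s₃ s₂ s₁ : State}
    (h32 : StateGe A s₃ s₂) (h21 : StateGe A s₂ s₁) : StateGe A s₃ s₁ := by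
  intro p hp
  have h2 : p ∈ dm A s₂ := by
    intro hy
    rw [h21 p hp]
    exact hp hy
  rw [h32 p h2, h21 p hp]

theorem oracle_computable (A : ℕ → ℕ → ℕ → Prop) (i : ℕ) (u : State → ℕ)
    (hu : ∀ s : State, ∃ s' : State, StateGe A s' s ∧
        ∀ s'' : State, StateGe A s'' s' → u s'' = u s') :
    ∀ s : State, ∃ s' : State, StateGe A s' s ∧
      ∀ s'' : State, StateGe A s'' s' → s'' i (u s'') = s' i (u s') := by
  intro s
  obtain ⟨s₁, h1, h2⟩ := hu s
  set n := u s₁ with hn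
  by_cases hd : (i, n) ∈ dm A s₁
  · refine ⟨s₁, h1, fun s'' hs'' => ?_⟩
    rw [h2 s'' hs'']
    exact hs'' (i, n) hd
  · have hd' : (∃ y, A i n y) ∧ ¬ A i n (s₁ i n) := by
      simpa [dm, Classical.not_imp] using hd
    obtain ⟨⟨w, hw⟩, _⟩ := hd'
    set s₂ : State := fun a b => if a = i ∧ b = n then w else s₁ a b with hs₂
    have h21 : StateGe A s₂ s₁ := by
      intro p hp
      simp only [hs₂]
      split_ifs with hc
      · exfalso
        obtain ⟨ha, hb⟩ := hc
        apply hd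
        have : p = (i, n) := Prod.ext ha hb
        rwa [this] at hp
      · rfl
    have hun : u s₂ = n := h2 s₂ h21
    have hdn : (i, n) ∈ dm A s₂ := by
      intro _
      simp [hs₂, hw]
    refine ⟨s₂, stateGe_trans h21 h1, fun s'' hs'' => ?_⟩
    have : u s'' = n := h2 s'' (stateGe_trans hs'' h21)
    rw [this, hun]
    exact hs'' (i, n) hdn
end
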